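/- arXiv:1203.2543 — 6 statements merged into one kernel-verified Lean document; each statement's English description precedes it below -/
import Mathlib

section
/- In the power of a path P_n^k with n ≥ 2k + 1, every edge is contained in an induced path on 3 vertices; consequently every biclique (maximal complete bipartite subgraph with at least one edge) of P_n^k has exactly 3 vertices. -/
open SimpleGraph

/-- The `k`-th power of a path on `n` vertices: `v_i ~ v_j` iff `0 < |i - j| ≤ k`. -/
def pathPower (n k : ℕ) : SimpleGraph (Fin n) :=
  SimpleGraph.fromRel (fun i j => i.val ≤ j.val ∧ j.val ≤ i.val + k)

/-- The cyclic distance between two vertices of `ZMod n`. -/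
def cdist (n : ℕ) (i j : ZMod n) : ℕ := min (i - j).val (j - i).val

/-- The `k`-th power of a cycle on `n` vertices: `v_i ~ v_j` iff the
cyclic distance between `i` and `j` is between `1` and `k`. -/
def cyclePower (n k : ℕ) : SimpleGraph (ZMod n) :=
  SimpleGraph.fromRel (fun i j => cdist n i j ≤ k)

/-- `S` induces a complete bipartite subgraph of `G`. -/
def IsCompleteBipartiteSet {V : Type*} (G : SimpleGraph V) (S : Set V) : Prop :=
  ∃ A B : Set V, A ∪ B = S ∧ Disjoint A B ∧
    (∀ a ∈ A, ∀ b ∈ B, G.Adj a b) ∧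
    (∀ a ∈ A, ∀ a' ∈ A, ¬ G.Adj a a') ∧
    (∀ b ∈ B, ∀ b' ∈ B, ¬ G.Adj b b')

/-- A biclique: a maximal set of vertices inducing a complete bipartite
subgraph with at least one edge. -/
def IsBiclique {V : Type*} (G : SimpleGraph V) (S : Set V) : Prop :=
  IsCompleteBipartiteSet G S ∧ (∃ u ∈ S, ∃ v ∈ S, G.Adj u v) ∧
  ∀ T : Set V, S ⊆ T → IsCompleteBipartiteSet G T → T = S

/-- A set is monochromatic under a colouring. -/
def Monochromatic {V α : Type*} (c : V → α) (S : Set V) : Prop :=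
  ∃ a, ∀ v ∈ S, c v = a

/-- `G` admits a biclique-colouring with `m` colours. -/
def BicliqueColorable {V : Type*} (G : SimpleGraph V) (m : ℕ) : Prop :=
  ∃ c : V → Fin m, ∀ S : Set V, IsBiclique G S → ¬ Monochromatic c S

/-- The biclique-chromatic number. -/
noncomputable def bicliqueChromaticNumber {V : Type*} (G : SimpleGraph V) : ℕ :=
  sInf {m | BicliqueColorable G m}

/-- `a`, `b`, `c` induce a path on three vertices (with middle vertex `b`). -/
def IsInducedP3 {V : Type*} (G : SimpleGraph V) (a b c : V) : Prop :=
  a ≠ b ∧ b ≠ c ∧ a ≠ c ∧ G.Adj a b ∧ G.Adj b c ∧ ¬ G.Adj a c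

/-- `a`, `b`, `c`, `d` induce a four-cycle (in this cyclic order). -/
def IsInducedC4 {V : Type*} (G : SimpleGraph V) (a b c d : V) : Prop :=
  a ≠ b ∧ a ≠ c ∧ a ≠ d ∧ b ≠ c ∧ b ≠ d ∧ c ≠ d ∧
  G.Adj a b ∧ G.Adj b c ∧ G.Adj c d ∧ G.Adj d a ∧ ¬ G.Adj a c ∧ ¬ G.Adj b d

/-!
A complete bipartite set with an edge and parts `A`, `B` has a part of size one, since two
vertices on each side would span an induced `C₄`; the other part is then an independent set in
the neighbourhood of that vertex, so it has at most two vertices because the graph is claw-free.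
Conversely, if a biclique were a single edge `uv`, the induced `P₃` through `uv` would be a
larger complete bipartite set. In `P_n^k` the three conditions are linear constraints on
indices; for the `P₃`, extend the edge `i < j` to `i + k + 1` when this is a vertex, and
otherwise to `j - k - 1`, which is then a vertex because `n ≥ 2k + 1`.
-/

variable {V : Type*}

def IsInducedClaw (G : SimpleGraph V) (c x y z : V) : Prop :=
  G.Adj c x ∧ G.Adj c y ∧ G.Adj c z ∧ x ≠ y ∧ x ≠ z ∧ y ≠ z ∧
    ¬ G.Adj x y ∧ ¬ G.Adj x z ∧ ¬ G.Adj y z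

def ClawFree (G : SimpleGraph V) : Prop := ∀ c x y z, ¬ IsInducedClaw G c x y z

def C4Free (G : SimpleGraph V) : Prop := ∀ a b c d, ¬ IsInducedC4 G a b c d

def EdgesInInducedP3 (G : SimpleGraph V) : Prop :=
  ∀ u v, G.Adj u v → ∃ a b c, IsInducedP3 G a b c ∧
    u ∈ ({a, b, c} : Set V) ∧ v ∈ ({a, b, c} : Set V)

section General

variable {G : SimpleGraph V}

theorem IsInducedP3.isCompleteBipartiteSet {a b c : V} (h : IsInducedP3 G a b c) :
    IsCompleteBipartiteSet G {a, b, c} := by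
  obtain ⟨hab, hbc, -, hadj_ab, hadj_bc, hnadj⟩ := h
  have hnadj' : ¬ G.Adj c a := fun h => hnadj h.symm
  refine ⟨{a, c}, {b}, by rw [Set.union_singleton, Set.insert_comm], ?_, ?_, ?_, ?_⟩
  · simpa [Set.disjoint_singleton_right] using ⟨hab.symm, hbc⟩
  · simp only [Set.mem_insert_iff, Set.mem_singleton_iff]
    rintro x (rfl | rfl) y rfl
    exacts [hadj_ab, hadj_bc.symm]
  · simp only [Set.mem_insert_iff, Set.mem_singleton_iff]
    rintro x (rfl | rfl) y (rfl | rfl) <;> simp [hnadj, hnadj']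
  · simp

theorem subsingleton_or_subsingleton_of_c4Free (hG : C4Free G) {A B : Set V}
    (hAB : ∀ a ∈ A, ∀ b ∈ B, G.Adj a b) (hA : ∀ a ∈ A, ∀ a' ∈ A, ¬ G.Adj a a')
    (hB : ∀ b ∈ B, ∀ b' ∈ B, ¬ G.Adj b b') : A.Subsingleton ∨ B.Subsingleton := by
  by_contra! h
  obtain ⟨⟨a, ha, a', ha', haa'⟩, ⟨b, hb, b', hb', hbb'⟩⟩ := h
  exact hG a b a' b' ⟨(hAB a ha b hb).ne, haa', (hAB a ha b' hb').ne, (hAB a' ha' b hb).ne.symm,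
    hbb', (hAB a' ha' b' hb').ne, hAB a ha b hb, (hAB a' ha' b hb).symm, hAB a' ha' b' hb',
    (hAB a ha b' hb').symm, hA a ha a' ha', hB b hb b' hb'⟩

theorem encard_le_two_of_clawFree (hG : ClawFree G) {c : V} {B : Set V}
    (hc : ∀ b ∈ B, G.Adj c b) (hB : ∀ b ∈ B, ∀ b' ∈ B, ¬ G.Adj b b') : B.encard ≤ 2 := by
  by_contra! h
  obtain ⟨x, hx⟩ := Set.nonempty_of_encard_ne_zero (h.trans' (by norm_num)).ne'
  obtain ⟨y, hy, hyx⟩ := Set.exists_ne_of_one_lt_encard (h.trans' (by norm_num)) x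
  have hnsub : ¬ B ⊆ {x, y} := fun hsub =>
    h.not_ge ((Set.encard_le_encard hsub).trans (Set.encard_pair hyx.symm).le)
  obtain ⟨z, hz, hzxy⟩ := Set.not_subset.mp hnsub
  simp only [Set.mem_insert_iff, Set.mem_singleton_iff, not_or] at hzxy
  exact hG c x y z ⟨hc x hx, hc y hy, hc z hz, hyx.symm, Ne.symm hzxy.1, Ne.symm hzxy.2,
    hB x hx y hy, hB x hx z hz, hB y hy z hz⟩

theorem IsCompleteBipartiteSet.encard_le_three (hclaw : ClawFree G) (hC4 : C4Free G)
    {S : Set V} (hS : IsCompleteBipartiteSet G S) (hedge : ∃ u ∈ S, ∃ v ∈ S, G.Adj u v) :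
    S.encard ≤ 3 := by
  obtain ⟨A, B, rfl, -, hAB, hA, hB⟩ := hS
  obtain ⟨⟨a, ha⟩, ⟨b, hb⟩⟩ : A.Nonempty ∧ B.Nonempty := by
    obtain ⟨u, hu, v, hv, huv⟩ := hedge
    rcases hu with hu | hu <;> rcases hv with hv | hv
    exacts [(hA u hu v hv huv).elim, ⟨⟨u, hu⟩, ⟨v, hv⟩⟩, ⟨⟨v, hv⟩, ⟨u, hu⟩⟩,
      (hB u hu v hv huv).elim]
  refine (Set.encard_union_le A B).trans ?_
  rcases subsingleton_or_subsingleton_of_c4Free hC4 hAB hA hB with hA1 | hB1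
  · calc A.encard + B.encard ≤ 1 + 2 :=
          add_le_add (Set.encard_le_one_iff_subsingleton.mpr hA1)
            (encard_le_two_of_clawFree hclaw (hAB a ha) hB)
      _ = 3 := rfl
  · calc A.encard + B.encard ≤ 2 + 1 :=
          add_le_add (encard_le_two_of_clawFree hclaw (fun a' ha' => (hAB a' ha' b hb).symm) hA)
            (Set.encard_le_one_iff_subsingleton.mpr hB1)
      _ = 3 := rfl

theorem IsBiclique.three_le_encard (hP3 : EdgesInInducedP3 G) {S : Set V}
    (hS : IsBiclique G S) : 3 ≤ S.encard := by
  obtain ⟨-, ⟨u, hu, v, hv, huv⟩, hmax⟩ := hS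
  obtain ⟨a, b, c, hT, hu', hv'⟩ := hP3 u v huv
  by_contra! hlt
  have hS2 : S.encard ≤ 2 := Order.le_of_lt_succ hlt
  have hSuv : ({u, v} : Set V) = S :=
    (Set.finite_of_encard_le_coe hS2).eq_of_subset_of_encard_le' (Set.pair_subset hu hv)
      (hS2.trans (Set.encard_pair huv.ne).ge)
  have hST : S = {a, b, c} :=
    (hmax _ (hSuv ▸ Set.pair_subset hu' hv') hT.isCompleteBipartiteSet).symm
  obtain ⟨hab, hbc, hac, -⟩ := hT
  exact hlt.ne (Set.encard_eq_three.mpr ⟨a, b, c, hab, hac, hbc, hST⟩)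

theorem IsBiclique.ncard_eq_three (hclaw : ClawFree G) (hC4 : C4Free G)
    (hP3 : EdgesInInducedP3 G) {S : Set V} (hS : IsBiclique G S) : S.ncard = 3 := by
  rw [Set.ncard_def,
    le_antisymm (hS.1.encard_le_three hclaw hC4 hS.2.1) (hS.three_le_encard hP3)]
  rfl

end General

section PathPower

variable {n k : ℕ}

theorem pathPower_adj_iff {u v : Fin n} :
    (pathPower n k).Adj u v ↔ (u : ℕ) ≠ v ∧ (v : ℕ) ≤ u + k ∧ (u : ℕ) ≤ v + k := by
  simp only [pathPower, fromRel_adj, Ne, Fin.ext_iff]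
  omega

theorem pathPower_clawFree : ClawFree (pathPower n k) := by
  intro c x y z
  simp only [IsInducedClaw, pathPower_adj_iff, Ne, Fin.ext_iff]
  omega

theorem pathPower_c4Free : C4Free (pathPower n k) := by
  intro a b c d
  simp only [IsInducedC4, pathPower_adj_iff, Ne, Fin.ext_iff]
  omega

theorem pathPower_edgesInInducedP3 (h : 2 * k + 1 ≤ n) : EdgesInInducedP3 (pathPower n k) := by
  intro u v huv
  wlog hlt : (u : ℕ) < v generalizing u v
  · obtain ⟨a, b, c, hP3, hv, hu⟩ :=
      this v u huv.symm (by have := pathPower_adj_iff.mp huv; omega)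
    exact ⟨a, b, c, hP3, hu, hv⟩
  rw [pathPower_adj_iff] at huv
  by_cases hright : (u : ℕ) + k + 1 < n
  · refine ⟨u, v, ⟨u + k + 1, hright⟩, ?_, by simp, by simp⟩
    simp only [IsInducedP3, pathPower_adj_iff, Ne, Fin.ext_iff]
    omega
  · refine ⟨⟨v - k - 1, by omega⟩, u, v, ?_, by simp, by simp⟩
    simp only [IsInducedP3, pathPower_adj_iff, Ne, Fin.ext_iff]
    omega

end PathPower

/-- In `P_n^k` with `n ≥ 2k + 1`, every edge is contained in an induced `P_3`;
consequently every biclique has exactly 3 vertices. -/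
theorem stmt_1 (n k : ℕ) (h : 2 * k + 1 ≤ n) :
    (∀ u v : Fin n, (pathPower n k).Adj u v →
      ∃ a b c : Fin n, IsInducedP3 (pathPower n k) a b c ∧
        u ∈ ({a, b, c} : Set (Fin n)) ∧ v ∈ ({a, b, c} : Set (Fin n))) ∧
    (∀ S : Set (Fin n), IsBiclique (pathPower n k) S → S.ncard = 3) :=
  ⟨pathPower_edgesInInducedP3 h, fun _ hS =>
    hS.ncard_eq_three pathPower_clawFree pathPower_c4Free (pathPower_edgesInInducedP3 h)⟩
end

section
/- In the power of a cycle C_n^k with 2k + 2 ≤ n ≤ 3k + 1, the four vertices v_0, v_{⌈n/4⌉}, v_{⌈n/2⌉}, v_{⌈3n/4⌉} induce a 4-cycle C_4. -/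
open SimpleGraph

/-!
Read the four vertices as the naturals `0 < ⌈n/4⌉ < ⌈n/2⌉ < ⌈3n/4⌉ < n`. For naturals
`i < j < n` the cyclic distance of `v_i` and `v_j` is `min (j - i) (n - (j - i))`, so the claim
becomes arithmetic: cyclically consecutive vertices are about `n/4 ≤ k` apart (as `n ≤ 3k + 1`),
opposite ones about `n/2 > k` apart (as `n ≥ 2k + 2`).
-/

theorem cdist_comm (n : ℕ) (x y : ZMod n) : cdist n x y = cdist n y x :=
  Nat.min_comm _ _

theorem cyclePower_adj {n k : ℕ} {x y : ZMod n} :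
    (cyclePower n k).Adj x y ↔ x ≠ y ∧ cdist n x y ≤ k := by
  rw [cyclePower, fromRel_adj, cdist_comm n y, or_self]

theorem natCast_ne_natCast_of_lt {n i j : ℕ} (hij : i < j) (hj : j < n) :
    (i : ZMod n) ≠ j := fun h => hij.ne <| by
  simpa only [ZMod.val_cast_of_lt (hij.trans hj), ZMod.val_cast_of_lt hj] using congrArg ZMod.val h

theorem cdist_natCast_of_lt {n i j : ℕ} (hij : i < j) (hj : j < n) :
    cdist n i j = min (j - i) (n - (j - i)) := by
  have hji : (j : ZMod n) - i = ((j - i : ℕ) : ZMod n) := by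
    rw [Nat.cast_sub hij.le]
  have hij' : (i : ZMod n) - j = ((n - (j - i) : ℕ) : ZMod n) := by
    rw [Nat.cast_sub (by omega : j - i ≤ n), ZMod.natCast_self, ← hji, zero_sub, neg_sub]
  rw [cdist, hji, hij', ZMod.val_cast_of_lt (by omega), ZMod.val_cast_of_lt (by omega),
    Nat.min_comm]

theorem cyclePower_adj_natCast_iff {n k i j : ℕ} (hij : i < j) (hj : j < n) :
    (cyclePower n k).Adj (i : ZMod n) j ↔ min (j - i) (n - (j - i)) ≤ k := by
  rw [cyclePower_adj, cdist_natCast_of_lt hij hj, and_iff_right (natCast_ne_natCast_of_lt hij hj)]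

theorem isInducedC4_cyclePower_natCast_iff {n k a b c d : ℕ} (hab : a < b) (hbc : b < c)
    (hcd : c < d) (hd : d < n) :
    IsInducedC4 (cyclePower n k) (a : ZMod n) b c d ↔
      min (b - a) (n - (b - a)) ≤ k ∧ min (c - b) (n - (c - b)) ≤ k ∧
      min (d - c) (n - (d - c)) ≤ k ∧ min (d - a) (n - (d - a)) ≤ k ∧
      k < min (c - a) (n - (c - a)) ∧ k < min (d - b) (n - (d - b)) := by
  have hb := hbc.trans (hcd.trans hd)
  have hc := hcd.trans hd
  simp only [IsInducedC4, (cyclePower n k).adj_comm (d : ZMod n), not_le,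
    cyclePower_adj_natCast_iff hab hb, cyclePower_adj_natCast_iff hbc hc,
    cyclePower_adj_natCast_iff hcd hd, cyclePower_adj_natCast_iff (hab.trans (hbc.trans hcd)) hd,
    cyclePower_adj_natCast_iff (hab.trans hbc) hc, cyclePower_adj_natCast_iff (hbc.trans hcd) hd,
    natCast_ne_natCast_of_lt hab hb, natCast_ne_natCast_of_lt (hab.trans hbc) hc,
    natCast_ne_natCast_of_lt (hab.trans (hbc.trans hcd)) hd, natCast_ne_natCast_of_lt hbc hc,
    natCast_ne_natCast_of_lt (hbc.trans hcd) hd, natCast_ne_natCast_of_lt hcd hd,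
    ne_eq, not_false_eq_true, true_and]

/-- In `C_n^k` with `2k + 2 ≤ n ≤ 3k + 1`, the vertices
`v_0, v_{⌈n/4⌉}, v_{⌈n/2⌉}, v_{⌈3n/4⌉}` induce a `C_4`. -/
theorem stmt_4 (n k : ℕ) (h1 : 2 * k + 2 ≤ n) (h2 : n ≤ 3 * k + 1) :
    IsInducedC4 (cyclePower n k) (0 : ZMod n) (((n + 3) / 4 : ℕ) : ZMod n)
      (((n + 1) / 2 : ℕ) : ZMod n) (((3 * n + 3) / 4 : ℕ) : ZMod n) := by
  rw [← Nat.cast_zero]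
  refine (isInducedC4_cyclePower_natCast_iff ?_ ?_ ?_ ?_).2 ?_ <;> omega
end

section
/- In the power of a cycle C_n^k with n ≥ 3k + 2, the vertices v_0, v_k, v_{k+1} induce a path P_3 that is a biclique, i.e., a maximal induced complete bipartite subgraph. -/
open SimpleGraph

/-
With the bipartition `{v_0, v_{k+1}} ∪ {v_k}`, any vertex extending the `P_3` to a larger induced
complete bipartite subgraph would be either a neighbour of `v_k` far from both `v_0` and `v_{k+1}`,
or a common neighbour of `v_0` and `v_{k+1}` far from `v_k`. The first kind cannot exist since
all neighbours of `v_k` lie in `v_0, …, v_{2k}`; the second cannot exist since the common neighbours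
of `v_0` and `v_{k+1}` are `v_1, …, v_k` once the arc from `v_{k+1}` on to `v_0` has at least
`2k` inner vertices, i.e. once `n ≥ 3k + 2`.
-/

namespace SimpleGraph

variable {V : Type*} {G : SimpleGraph V}

lemma IsCompleteBipartiteSet.exists_sides_of_mem {T : Set V} (hT : IsCompleteBipartiteSet G T)
    {x : V} (hx : x ∈ T) :
    ∃ A B : Set V, A ∪ B = T ∧ x ∈ A ∧
      (∀ a ∈ A, ∀ b ∈ B, G.Adj a b) ∧
      (∀ a ∈ A, ∀ a' ∈ A, ¬ G.Adj a a') ∧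
      (∀ b ∈ B, ∀ b' ∈ B, ¬ G.Adj b b') := by
  obtain ⟨A, B, hAB, -, hcross, hA, hB⟩ := hT
  rcases (hAB ▸ hx : x ∈ A ∪ B) with hxA | hxB
  · exact ⟨A, B, hAB, hxA, hcross, hA, hB⟩
  · exact ⟨B, A, Set.union_comm A B ▸ hAB, hxB, fun b hb a ha => (hcross a ha b hb).symm, hB, hA⟩

variable {a b c : V}

lemma IsInducedP3.isCompleteBipartiteSet (hP : IsInducedP3 G a b c) :
    IsCompleteBipartiteSet G {a, b, c} := by
  obtain ⟨hab, hbc, -, hadj_ab, hadj_bc, hnadj_ac⟩ := hP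
  refine ⟨{a, c}, {b}, ?_, ?_, ?_, ?_, ?_⟩
  · ext; simp only [Set.mem_union, Set.mem_insert_iff, Set.mem_singleton_iff]; tauto
  · simpa using ⟨hab.symm, hbc⟩
  · simpa using ⟨hadj_ab, hadj_bc.symm⟩
  · simpa using ⟨hnadj_ac, fun h => hnadj_ac h.symm⟩
  · simp

theorem IsInducedP3.isBiclique (hP : IsInducedP3 G a b c)
    (h_ends : ∀ v, G.Adj v b → ¬ G.Adj v a → ¬ G.Adj v c → v = a ∨ v = c)
    (h_middle : ∀ v, G.Adj v a → G.Adj v c → ¬ G.Adj v b → v = b) :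
    IsBiclique G {a, b, c} := by
  obtain ⟨-, -, -, hab, hbc, -⟩ := id hP
  refine ⟨hP.isCompleteBipartiteSet, ⟨a, by simp, b, by simp, hab⟩, ?_⟩
  intro T hST hT
  obtain ⟨A, B, rfl, haA, hcross, hA, hB⟩ :=
    hT.exists_sides_of_mem (hST (Set.mem_insert a _))
  have hbB : b ∈ B :=
    ((hST (by simp) : b ∈ A ∪ B).resolve_left fun hbA => hA a haA b hbA hab)
  have hcA : c ∈ A :=
    ((hST (by simp) : c ∈ A ∪ B).resolve_right fun hcB => hB b hbB c hcB hbc)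
  refine Set.Subset.antisymm ?_ hST
  rintro v (hvA | hvB)
  · rcases h_ends v (hcross v hvA b hbB) (hA v hvA a haA) (hA v hvA c hcA) with rfl | rfl <;> simp
  · rw [h_middle v (hcross a haA v hvB).symm (hcross c hcA v hvB).symm (hB v hvB b hbB)]
    simp

end SimpleGraph

namespace ZMod

lemma val_sub_of_lt {n : ℕ} [NeZero n] {a b : ZMod n} (h : a.val < b.val) :
    (a - b).val = n - (b.val - a.val) := by
  have hne : b - a ≠ 0 := by
    rw [sub_ne_zero]
    exact fun hba => h.ne (congrArg val hba).symm
  rw [← neg_sub, neg_val, if_neg hne, val_sub h.le]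

end ZMod

section cyclePower

variable {n k : ℕ} [NeZero n]

lemma cdist_le_iff {u v : ZMod n} :
    cdist n u v ≤ k ↔
      (u.val ≤ v.val + k ∧ v.val ≤ u.val + k) ∨ u.val + n ≤ v.val + k ∨ v.val + n ≤ u.val + k := by
  have hu := u.val_lt
  have hv := v.val_lt
  unfold cdist
  rcases lt_trichotomy u.val v.val with h | h | h
  · rw [ZMod.val_sub_of_lt h, ZMod.val_sub h.le]; omega
  · rw [ZMod.val_sub h.ge, ZMod.val_sub h.le]; omega
  · rw [ZMod.val_sub h.le, ZMod.val_sub_of_lt h]; omega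

lemma cyclePower_adj_iff {u v : ZMod n} :
    (cyclePower n k).Adj u v ↔ u.val ≠ v.val ∧
      ((u.val ≤ v.val + k ∧ v.val ≤ u.val + k) ∨ u.val + n ≤ v.val + k ∨
        v.val + n ≤ u.val + k) := by
  rw [cyclePower, fromRel_adj, (ZMod.val_injective n).ne_iff, cdist_le_iff, cdist_le_iff]
  refine and_congr_right fun _ => ?_
  omega

lemma cyclePower_isInducedP3 (hk : 1 ≤ k) (h : 2 * k + 2 ≤ n) :
    IsInducedP3 (cyclePower n k) 0 ((k : ℕ) : ZMod n) ((k + 1 : ℕ) : ZMod n) := by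
  have hk' : ((k : ℕ) : ZMod n).val = k := ZMod.val_natCast_of_lt (by omega)
  have hk1' : ((k + 1 : ℕ) : ZMod n).val = k + 1 := ZMod.val_natCast_of_lt (by omega)
  simp only [IsInducedP3, cyclePower_adj_iff, ← (ZMod.val_injective n).ne_iff, ZMod.val_zero,
    hk', hk1']
  omega

lemma cyclePower_eq_zero_or_eq_of_adj (h : k + 2 ≤ n) {v : ZMod n}
    (hv_k : (cyclePower n k).Adj v (k : ℕ)) (hv_0 : ¬ (cyclePower n k).Adj v 0)
    (hv_k1 : ¬ (cyclePower n k).Adj v (k + 1 : ℕ)) :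
    v = 0 ∨ v = ((k + 1 : ℕ) : ZMod n) := by
  have hk' : ((k : ℕ) : ZMod n).val = k := ZMod.val_natCast_of_lt (by omega)
  have hk1' : ((k + 1 : ℕ) : ZMod n).val = k + 1 := ZMod.val_natCast_of_lt (by omega)
  have hv := v.val_lt
  simp only [cyclePower_adj_iff, ZMod.val_zero, hk', hk1'] at hv_k hv_0 hv_k1
  rw [← (ZMod.val_injective n).eq_iff, ← (ZMod.val_injective n).eq_iff, ZMod.val_zero, hk1']
  omega

lemma cyclePower_eq_of_adj_of_adj (h : 3 * k + 2 ≤ n) {v : ZMod n}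
    (hv_0 : (cyclePower n k).Adj v 0) (hv_k1 : (cyclePower n k).Adj v (k + 1 : ℕ))
    (hv_k : ¬ (cyclePower n k).Adj v (k : ℕ)) :
    v = ((k : ℕ) : ZMod n) := by
  have hk' : ((k : ℕ) : ZMod n).val = k := ZMod.val_natCast_of_lt (by omega)
  have hk1' : ((k + 1 : ℕ) : ZMod n).val = k + 1 := ZMod.val_natCast_of_lt (by omega)
  have hv := v.val_lt
  simp only [cyclePower_adj_iff, ZMod.val_zero, hk', hk1'] at hv_k hv_0 hv_k1
  rw [← (ZMod.val_injective n).eq_iff, hk']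
  omega

end cyclePower

/-- In `C_n^k` with `n ≥ 3k + 2`, the vertices `v_0, v_k, v_{k+1}` induce a
`P_3` which is a biclique. -/
theorem stmt_7 (n k : ℕ) (hk : 1 ≤ k) (h : 3 * k + 2 ≤ n) :
    IsInducedP3 (cyclePower n k) (0 : ZMod n) ((k : ℕ) : ZMod n) ((k + 1 : ℕ) : ZMod n) ∧
    IsBiclique (cyclePower n k)
      {(0 : ZMod n), ((k : ℕ) : ZMod n), ((k + 1 : ℕ) : ZMod n)} := by
  have : NeZero n := ⟨by omega⟩
  have hP := cyclePower_isInducedP3 hk (n := n) (by omega)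
  exact ⟨hP, hP.isBiclique (fun _ => cyclePower_eq_zero_or_eq_of_adj (by omega))
    (fun _ => cyclePower_eq_of_adj_of_adj h)⟩
end

section
/- The power of a path P_n^k with k + 2 ≤ n ≤ 2k has biclique-chromatic number exactly 2k + 2 - n. -/
open SimpleGraph

/-!
The vertices `n - k - 1, …, k` of `P_n^k` are universal, and any two universal vertices form a
biclique, so they need `2k + 2 - n` distinct colours. Conversely, a biclique contained in a clique
is a single edge whose ends are closed twins, and in `P_n^k` that forces both ends to be
universal. Hence colouring the universal vertices distinctly and clamping the rest to the colours
of the two extreme universal vertices, which leaves two colour classes that are cliques and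
singletons otherwise, is a biclique-colouring.
-/

lemma pathPower_adj {n k : ℕ} {i j : Fin n} :
    (pathPower n k).Adj i j ↔ i.val ≠ j.val ∧ i.val ≤ j.val + k ∧ j.val ≤ i.val + k := by
  rw [pathPower, fromRel_adj, Ne, Fin.ext_iff]
  omega

lemma pathPower_adj_of_le_of_le {n k : ℕ} {x w : Fin n} (hlo : n ≤ x.val + k + 1)
    (hhi : x.val ≤ k) (hw : w ≠ x) : (pathPower n k).Adj x w := by
  have := w.isLt
  rw [Ne, Fin.ext_iff] at hw
  exact pathPower_adj.mpr ⟨Ne.symm hw, by omega, by omega⟩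

section Biclique

variable {V : Type*} {G : SimpleGraph V}

lemma IsCompleteBipartiteSet.eq_pair_of_isClique {S : Set V} (hS : IsCompleteBipartiteSet G S)
    (hclq : G.IsClique S) {u v : V} (hu : u ∈ S) (hv : v ∈ S) (huv : u ≠ v) : S = {u, v} := by
  obtain ⟨A, B, rfl, -, -, hA, hB⟩ := hS
  have hA' : A.Subsingleton := fun a ha a' ha' =>
    by_contra fun h => hA a ha a' ha' (hclq (Or.inl ha) (Or.inl ha') h)
  have hB' : B.Subsingleton := fun b hb b' hb' =>
    by_contra fun h => hB b hb b' hb' (hclq (Or.inr hb) (Or.inr hb') h)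
  refine Set.Subset.antisymm (fun x hx => ?_) (Set.insert_subset hu (Set.singleton_subset_iff.2 hv))
  rcases hu with hu | hu <;> rcases hv with hv | hv <;> rcases hx with hx | hx
  all_goals first
    | exact absurd (hA' hu hv) huv | exact absurd (hB' hu hv) huv
    | exact Or.inl (hA' hx hu) | exact Or.inl (hB' hx hu)
    | exact Or.inr (hA' hx hv) | exact Or.inr (hB' hx hv)

/-- The two ends of an edge forming a biclique are closed twins: otherwise a common
neighbour of one of them could be added on the other's side. -/
lemma IsBiclique.adj_of_adj_pair {u v w : V} (h : IsBiclique G {u, v}) (huv : G.Adj u v)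
    (hvw : G.Adj v w) (hwu : w ≠ u) : G.Adj u w := by
  by_contra huw
  have hwv : w ≠ v := hvw.ne.symm
  have hcb : IsCompleteBipartiteSet G ({v} ∪ {u, w}) := by
    refine ⟨{v}, {u, w}, rfl, ?_, ?_, ?_, ?_⟩
    · simpa [Set.disjoint_singleton_left] using ⟨huv.ne.symm, hwv.symm⟩
    · rintro a rfl b (rfl | rfl)
      exacts [huv.symm, hvw]
    · rintro a rfl a' rfl
      exact G.irrefl
    · rintro b (rfl | rfl) b' (rfl | rfl)
      exacts [G.irrefl, huw, fun h => huw h.symm, G.irrefl]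
  have hw : w ∈ ({u, v} : Set V) := by
    rw [← h.2.2 _ (by simp [Set.insert_subset_iff]) hcb]
    simp
  simp [hwu, hwv] at hw

lemma isBiclique_pair_of_forall_adj {u v : V} (hu : ∀ w, w ≠ u → G.Adj u w)
    (hv : ∀ w, w ≠ v → G.Adj v w) (huv : u ≠ v) : IsBiclique G {u, v} := by
  have hadj : G.Adj u v := hu v huv.symm
  refine ⟨⟨{u}, {v}, Set.singleton_union, Set.disjoint_singleton.mpr huv,
    by simpa using hadj, by simp, by simp⟩, ⟨u, by simp, v, by simp, hadj⟩, ?_⟩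
  rintro T hsub ⟨A, B, rfl, -, -, hA, hB⟩
  refine Set.Subset.antisymm (fun w hw => ?_) hsub
  by_contra hw'
  simp only [Set.mem_insert_iff, Set.mem_singleton_iff, not_or] at hw'
  have huT : u ∈ A ∪ B := hsub (by simp)
  have hvT : v ∈ A ∪ B := hsub (by simp)
  rcases huT with huT | huT <;> rcases hvT with hvT | hvT <;> rcases hw with hw | hw
  all_goals first
    | exact hA u huT v hvT hadj | exact hB u huT v hvT hadj
    | exact hA u huT w hw (hu w hw'.1) | exact hB u huT w hw (hu w hw'.1)
    | exact hA v hvT w hw (hv w hw'.2) | exact hB v hvT w hw (hv w hw'.2)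

end Biclique

/-- Otherwise `u + k + 1` or `v - k - 1` is a neighbour of exactly one of `u`, `v`. -/
lemma pathPower_le_of_isBiclique_pair {n k : ℕ} {u v : Fin n}
    (h : IsBiclique (pathPower n k) {u, v}) (huv : (pathPower n k).Adj u v) (hlt : u.val < v.val) :
    n ≤ u.val + k + 1 ∧ v.val ≤ k := by
  have hv := v.isLt
  have huv' := pathPower_adj.mp huv
  constructor
  · by_contra! hn
    have hadj := h.adj_of_adj_pair huv (w := ⟨u.val + k + 1, hn⟩)
      (pathPower_adj.mpr ⟨by dsimp only; omega, by dsimp only; omega, by dsimp only; omega⟩)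
      (by rw [Ne, Fin.ext_iff]; dsimp only; omega)
    have := (pathPower_adj.mp hadj).2.2
    dsimp only at this
    omega
  · by_contra! hk
    rw [Set.pair_comm] at h
    have hadj := h.adj_of_adj_pair huv.symm (w := ⟨v.val - (k + 1), by omega⟩)
      (pathPower_adj.mpr ⟨by dsimp only; omega, by dsimp only; omega, by dsimp only; omega⟩)
      (by rw [Ne, Fin.ext_iff]; dsimp only; omega)
    have := (pathPower_adj.mp hadj).2.1
    dsimp only at this
    omega

lemma bicliqueColorable_pathPower {n k : ℕ} (h : n ≤ 2 * k) :
    BicliqueColorable (pathPower n k) (2 * k + 2 - n) := by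
  refine ⟨fun i => ⟨min i.val k - (n - k - 1), by omega⟩, ?_⟩
  rintro S hS ⟨γ, hγ⟩
  have hcol : ∀ x ∈ S, min x.val k - (n - k - 1) = (γ : ℕ) := fun x hx => congrArg Fin.val (hγ x hx)
  have hclq : (pathPower n k).IsClique S := by
    intro x hx y hy hxy
    have := hcol x hx
    have := hcol y hy
    have := x.isLt
    have := y.isLt
    rw [Ne, Fin.ext_iff] at hxy
    exact pathPower_adj.mpr ⟨hxy, by omega, by omega⟩
  obtain ⟨u, hu, v, hv, huv⟩ := hS.2.1
  have hSuv := hS.1.eq_pair_of_isClique hclq hu hv huv.ne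
  have hcu := hcol u hu
  have hcv := hcol v hv
  have huv' := pathPower_adj.mp huv
  rcases Nat.lt_or_gt_of_ne huv'.1 with hlt | hlt
  · have := pathPower_le_of_isBiclique_pair (hSuv ▸ hS) huv hlt
    omega
  · rw [hSuv, Set.pair_comm] at hS
    have := pathPower_le_of_isBiclique_pair hS huv.symm hlt
    omega

lemma le_of_bicliqueColorable_pathPower {n k m : ℕ} (h : k < n)
    (hm : BicliqueColorable (pathPower n k) m) : 2 * k + 2 - n ≤ m := by
  obtain ⟨c, hc⟩ := hm
  let band : Fin (2 * k + 2 - n) → Fin n := fun a => ⟨n - k - 1 + a.val, by omega⟩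
  have hband : ∀ a, ∀ w, w ≠ band a → (pathPower n k).Adj (band a) w := fun a _ hw =>
    pathPower_adj_of_le_of_le (by dsimp only [band]; omega) (by dsimp only [band]; omega) hw
  have hinj : Function.Injective (c ∘ band) := by
    intro a b hab
    by_contra hne
    have hne' : band a ≠ band b := by simpa [band, Fin.ext_iff] using hne
    refine hc _ (isBiclique_pair_of_forall_adj (hband a) (hband b) hne') ⟨c (band a), ?_⟩
    rintro x (rfl | rfl)
    exacts [rfl, hab.symm]
  simpa using Fintype.card_le_of_injective _ hinj

/-- `P_n^k` with `k + 2 ≤ n ≤ 2k` has biclique-chromatic number `2k + 2 - n`. -/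
theorem stmt_8 (n k : ℕ) (h1 : k + 2 ≤ n) (h2 : n ≤ 2 * k) :
    bicliqueChromaticNumber (pathPower n k) = 2 * k + 2 - n := by
  have hcol := bicliqueColorable_pathPower h2
  exact le_antisymm (Nat.sInf_le hcol)
    (le_csInf ⟨_, hcol⟩ fun m hm => le_of_bicliqueColorable_pathPower (by omega) hm)
end

section
/- Let C_n^k be a power of a cycle with n ≥ 2k + 2, and consider a 2-colouring of its vertices in which every maximal monochromatic set of cyclically consecutive vertices (monochromatic block) has size k or k + 1. Then no three vertices of the same colour induce a path P_3. -/
/-!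
Since every block has at least `k` vertices, two vertices of the same colour at distance
`d ≤ k` along the cycle cannot enclose a vertex of the other colour: it would lie in a block
squeezed strictly between them. An induced `P_3` `x - y - z` in `C_n^k` has `y` between `x`
and `z`, at distance at most `k` from each, while `x` and `z` are more than `k` apart. A
monochromatic `P_3` would therefore give `k + 2` consecutive vertices of one colour, which
would lie in a block of more than `k + 1` vertices.
-/

open SimpleGraph

/-- `i, i+1, ..., i+l-1` is a maximal monochromatic run (block) of
cyclically consecutive vertices for the colouring `c`. -/
def IsBlock (n : ℕ) (c : ZMod n → Bool) (i : ZMod n) (l : ℕ) : Prop :=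
  1 ≤ l ∧ l ≤ n ∧ (∀ m : ℕ, m < l → c (i + (m : ZMod n)) = c i) ∧
  (l = n ∨ (c (i - 1) ≠ c i ∧ c (i + (l : ZMod n)) ≠ c i))

section Blocks

variable {n k : ℕ} [NeZero n] {c : ZMod n → Bool}

theorem exists_isBlock_of_color_sub_one_ne {p : ZMod n} (hp : c (p - 1) ≠ c p) :
    ∃ l, IsBlock n c p l ∧ c (p + l) ≠ c p := by
  classical
  have hlast : p + ((n - 1 : ℕ) : ZMod n) = p - 1 := by
    rw [Nat.cast_sub NeZero.one_le, ZMod.natCast_self]; ring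
  have hq : ∃ l : ℕ, c (p + l) ≠ c p := ⟨n - 1, by rwa [hlast]⟩
  have hend := Nat.find_spec hq
  have hpos : Nat.find hq ≠ 0 := fun h0 => by simp [h0] at hend
  have hle : Nat.find hq ≤ n - 1 := Nat.find_le (by rwa [hlast])
  exact ⟨Nat.find hq, ⟨by omega, by omega, fun m hm => not_not.1 (Nat.find_min hq hm),
    Or.inr ⟨hp, hend⟩⟩, hend⟩

theorem exists_isBlock_containing {x : ZMod n} (hx : ∃ v, c v ≠ c x) :
    ∃ p l s, IsBlock n c p l ∧ c (p + l) ≠ c p ∧ s < l ∧ p + s = x := by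
  classical
  obtain ⟨v, hv⟩ := hx
  have ht : ∃ t : ℕ, c (x - t) ≠ c x := ⟨(x - v).val, by simpa [ZMod.natCast_zmod_val]⟩
  have hstart := Nat.find_spec ht
  have hpos : Nat.find ht ≠ 0 := fun h0 => by simp [h0] at hstart
  have hback : ∀ s < Nat.find ht, c (x - s) = c x := fun s hs => not_not.1 (Nat.find_min ht hs)
  set s := Nat.find ht - 1
  have hp : c (x - s) = c x := hback s (by omega)
  have hpred : x - s - 1 = x - (Nat.find ht : ℕ) := by
    rw [show Nat.find ht = s + 1 by omega]; push_cast; ring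
  obtain ⟨l, hl, hend⟩ := exists_isBlock_of_color_sub_one_ne (c := c) (p := x - (s : ZMod n))
    (by rw [hpred, hp]; exact hstart)
  refine ⟨x - s, l, s, hl, hend, ?_, sub_add_cancel x _⟩
  by_contra! hls
  apply hend
  rw [show x - s + l = x - ((s - l : ℕ) : ZMod n) by push_cast [hls]; ring, hp]
  exact hback _ (by omega)

theorem color_add_eq_of_color_add_eq (hshort : ∀ i l, IsBlock n c i l → k ≤ l) {x : ZMod n}
    {d : ℕ} (hd : d ≤ k) (hxd : c (x + d) = c x) : ∀ m ≤ d, c (x + m) = c x := by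
  classical
  by_contra! hne
  obtain ⟨hmd, hm⟩ := Nat.find_spec hne
  set m := Nat.find hne
  have hpos : m ≠ 0 := fun h0 => by simp [h0] at hm
  have hprev : c (x + ((m - 1 : ℕ) : ZMod n)) = c x := by
    by_contra h
    exact Nat.find_min hne (show m - 1 < m by omega) ⟨by omega, h⟩
  have hpred : x + m - 1 = x + ((m - 1 : ℕ) : ZMod n) := by
    push_cast [Nat.one_le_iff_ne_zero.2 hpos]; ring
  obtain ⟨l, hl, -⟩ := exists_isBlock_of_color_sub_one_ne (c := c) (p := x + (m : ZMod n))
    (by rw [hpred, hprev]; exact Ne.symm hm)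
  have hld : l ≤ d - m := by
    by_contra! hlt
    apply hm
    have := hl.2.2.1 (d - m) hlt
    rw [show x + m + ((d - m : ℕ) : ZMod n) = x + d by push_cast [hmd]; ring, hxd] at this
    exact this.symm
  have := hshort _ _ hl
  omega

theorem exists_le_color_add_ne (hlong : ∀ i l, IsBlock n c i l → l ≤ k + 1) (hn : k + 1 < n)
    (x : ZMod n) : ∃ m ≤ k + 1, c (x + m) ≠ c x := by
  by_contra! hrun
  by_cases hconst : ∀ v, c v = c x
  · have := hlong _ _ (⟨NeZero.one_le, le_rfl, fun m _ => hconst _, Or.inl rfl⟩ :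
      IsBlock n c x n)
    omega
  push Not at hconst
  obtain ⟨p, l, s, hl, hend, hsl, rfl⟩ := exists_isBlock_containing hconst
  have hl1 := hlong _ _ hl
  apply hend
  rw [show p + l = p + s + ((l - s : ℕ) : ZMod n) by push_cast [hsl.le]; ring,
    hrun _ (by omega), hl.2.2.1 s hsl]

theorem color_add_add_ne (hshort : ∀ i l, IsBlock n c i l → k ≤ l)
    (hlong : ∀ i l, IsBlock n c i l → l ≤ k + 1) (hn : k + 1 < n) {x : ZMod n} {A B : ℕ}
    (hA : A ≤ k) (hB : B ≤ k) (hAB : k < A + B) (hxA : c (x + A) = c x) :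
    c (x + A + B) ≠ c (x + A) := by
  intro hxAB
  obtain ⟨m, hm, hne⟩ := exists_le_color_add_ne hlong hn x
  by_cases hmA : m ≤ A
  · exact hne (color_add_eq_of_color_add_eq hshort hA hxA m hmA)
  · apply hne
    rw [show x + m = x + A + ((m - A : ℕ) : ZMod n) by push_cast [(not_le.1 hmA).le]; ring,
      color_add_eq_of_color_add_eq hshort hB hxAB _ (by omega), hxA]

end Blocks

section CyclePower

variable {n k : ℕ} [NeZero n] {x y z : ZMod n}

theorem cyclePower_adj_iff_s13 :
    (cyclePower n k).Adj x y ↔ x ≠ y ∧ ∃ d ≤ k, y = x + d ∨ x = y + d := by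
  have hval : ∀ (u : ZMod n) (d : ℕ), d ≤ k → (u + d - u).val ≤ k := fun u d hd => by
    simpa [ZMod.val_natCast] using (Nat.mod_le d n).trans hd
  rw [cyclePower, fromRel_adj, show cdist n y x = cdist n x y from min_comm _ _, or_self]
  refine and_congr_right fun _ => ⟨fun h => ?_, ?_⟩
  · rcases min_le_iff.1 h with h | h
    · exact ⟨(x - y).val, h, Or.inr (by rw [ZMod.natCast_zmod_val]; ring)⟩
    · exact ⟨(y - x).val, h, Or.inl (by rw [ZMod.natCast_zmod_val]; ring)⟩
  · rintro ⟨d, hd, rfl | rfl⟩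
    · exact (min_le_right _ _).trans (hval x d hd)
    · exact (min_le_left _ _).trans (hval y d hd)

theorem cyclePower_adj_of_add_eq_add {a b : ℕ} (hxz : x ≠ z) (ha : a ≤ k) (hb : b ≤ k)
    (h : x + a = z + b) : (cyclePower n k).Adj x z := by
  refine cyclePower_adj_iff_s13.2 ⟨hxz, ?_⟩
  rcases le_total a b with hab | hab
  · exact ⟨b - a, by omega, Or.inr (by push_cast [hab]; linear_combination h)⟩
  · exact ⟨a - b, by omega, Or.inl (by push_cast [hab]; linear_combination -h)⟩

theorem IsInducedP3.exists_cyclePower (hP : IsInducedP3 (cyclePower n k) x y z) :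
    ∃ A B, A ≤ k ∧ B ≤ k ∧ k < A + B ∧
      ((y = x + A ∧ z = y + B) ∨ (y = z + A ∧ x = y + B)) := by
  obtain ⟨-, -, hxz, hxy, hyz, hnxz⟩ := hP
  obtain ⟨-, a, ha, hxy⟩ := cyclePower_adj_iff_s13.1 hxy
  obtain ⟨-, b, hb, hyz⟩ := cyclePower_adj_iff_s13.1 hyz
  have hfar : ∀ d ≤ k, x ≠ z + d ∧ z ≠ x + d := fun d hd =>
    not_or.1 fun h => hnxz (cyclePower_adj_iff_s13.2 ⟨hxz, d, hd, h.symm⟩)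
  rcases hxy with rfl | rfl
  · rcases hyz with rfl | hyz
    · refine ⟨a, b, ha, hb, ?_, Or.inl ⟨rfl, rfl⟩⟩
      by_contra! hab
      exact (hfar _ hab).2 (by push_cast; ring)
    · exact absurd (cyclePower_adj_of_add_eq_add hxz ha hb hyz) hnxz
  · rcases hyz with rfl | rfl
    · exact absurd (cyclePower_adj_of_add_eq_add hxz hb ha (add_right_comm ..)) hnxz
    · refine ⟨b, a, hb, ha, ?_, Or.inr ⟨rfl, rfl⟩⟩
      by_contra! hab
      exact (hfar _ hab).1 (by push_cast; ring)

end CyclePower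

/-- If every monochromatic block of a 2-colouring of `C_n^k` (`n ≥ 2k + 2`) has
size `k` or `k + 1`, then no three same-coloured vertices induce a `P_3`. -/
theorem stmt_13 (n k : ℕ) (h : 2 * k + 2 ≤ n) (c : ZMod n → Bool)
    (hb : ∀ (i : ZMod n) (l : ℕ), IsBlock n c i l → l = k ∨ l = k + 1) :
    ∀ x y z : ZMod n, IsInducedP3 (cyclePower n k) x y z →
      ¬ (c x = c y ∧ c y = c z) := by
  have : NeZero n := ⟨by omega⟩
  have hshort : ∀ i l, IsBlock n c i l → k ≤ l := fun i l hl => by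
    rcases hb i l hl with rfl | rfl <;> omega
  have hlong : ∀ i l, IsBlock n c i l → l ≤ k + 1 := fun i l hl => by
    rcases hb i l hl with rfl | rfl <;> omega
  rintro x y z hP ⟨hxy, hyz⟩
  obtain ⟨A, B, hA, hB, hAB, ⟨rfl, rfl⟩ | ⟨rfl, rfl⟩⟩ := hP.exists_cyclePower
  · exact color_add_add_ne hshort hlong (by omega) hA hB hAB hxy.symm hyz.symm
  · exact color_add_add_ne hshort hlong (by omega) hA hB hAB hyz hxy
end

section
/- Given natural numbers n and k with k ≥ 1 and n ≥ 2k + 2, there exist natural numbers b and c with n = c·k + b, c even, c ≥ 2, and b ≤ c, if and only if either c₀ = ⌊n/k⌋ is even and n - c₀·k ≤ c₀, or c₁ = ⌊n/k⌋ - 1 is even and n - c₁·k ≤ c₁. -/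
/-!
Writing `n = c·k + b` with `b ≤ c` just says `c·k ≤ n ≤ c·(k + 1)`. Every such `c` is at most
`⌊n/k⌋`, and the upper bound `n ≤ c·(k + 1)` survives enlarging `c`, so whenever some even `c ≥ 2`
works, so does the largest even number not exceeding `⌊n/k⌋`: that is `⌊n/k⌋` or `⌊n/k⌋ - 1`.
-/

open SimpleGraph

theorem Nat.sub_mul_le_of_le {n k c c' : ℕ} (hcc' : c ≤ c') (hc' : c' * k ≤ n)
    (hc : n - c * k ≤ c) : n - c' * k ≤ c' := by
  have : c * k ≤ c' * k := Nat.mul_le_mul_right k hcc'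
  omega

theorem Nat.le_sub_one_of_even_of_odd {c q : ℕ} (hc : Even c) (hq : Odd q) (hcq : c ≤ q) :
    c ≤ q - 1 := by
  obtain ⟨s, rfl⟩ := hc
  obtain ⟨t, rfl⟩ := hq
  omega

/-- For `k ≥ 1` and `n ≥ 2k + 2`, there exist naturals `b`, `c` with
`n = c·k + b`, `c` even, `c ≥ 2` and `b ≤ c` iff `c₀ = ⌊n/k⌋` is even with
`n - c₀·k ≤ c₀`, or `c₁ = ⌊n/k⌋ - 1` is even with `n - c₁·k ≤ c₁`. -/
theorem stmt_17 (n k : ℕ) (hk : 1 ≤ k) (h : 2 * k + 2 ≤ n) :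
    (∃ b c : ℕ, n = c * k + b ∧ Even c ∧ 2 ≤ c ∧ b ≤ c) ↔
      ((Even (n / k) ∧ n - (n / k) * k ≤ n / k) ∨
       (Even (n / k - 1) ∧ n - (n / k - 1) * k ≤ n / k - 1)) := by
  have hq : 2 ≤ n / k := (Nat.le_div_iff_mul_le hk).mpr (by omega)
  have hqk : n / k * k ≤ n := Nat.div_mul_le_self n k
  have hq1k : (n / k - 1) * k ≤ n := (Nat.mul_le_mul_right k (Nat.sub_le _ 1)).trans hqk
  constructor
  · rintro ⟨b, c, hn, hc, -, hbc⟩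
    have hfit : n - c * k ≤ c := by omega
    have hcq : c ≤ n / k := (Nat.le_div_iff_mul_le hk).mpr (by omega)
    rcases Nat.even_or_odd (n / k) with hq_even | hq_odd
    · exact .inl ⟨hq_even, Nat.sub_mul_le_of_le hcq hqk hfit⟩
    · exact .inr ⟨Nat.Odd.sub_odd hq_odd odd_one,
        Nat.sub_mul_le_of_le (Nat.le_sub_one_of_even_of_odd hc hq_odd hcq) hq1k hfit⟩
  · rintro (⟨hq_even, hfit⟩ | ⟨hq1_even, hfit⟩)
    · exact ⟨_, _, (Nat.add_sub_of_le hqk).symm, hq_even, hq, hfit⟩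
    · have hq1 : 2 ≤ n / k - 1 := by
        obtain ⟨t, ht⟩ := hq1_even
        omega
      exact ⟨_, _, (Nat.add_sub_of_le hq1k).symm, hq1_even, hq1, hfit⟩
end
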